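/- Let H be a Hopf algebra over a field k and I a left ideal coideal of H. Then H(^{co H/I}H)⁺ ⊆ I, where (^{co H/I}H)⁺ = ^{co H/I}H ∩ ker ε. Together with K ⊆ ^{co H/HK⁺}H for right coideal subalgebras K, this establishes that K ↦ H/HK⁺ and H/I ↦ ^{co H/I}H form a Galois connection between the poset of right coideal subalgebras of H and the poset of generalised quotients H/I by left ideal coideals. -/
import Mathlib


open TensorProduct

variable {k H : Type*} [Field k] [Ring H] [HopfAlgebra k H]

/-- A right coideal subalgebra: a subalgebra `K` of `H` with `Δ(K) ⊆ K ⊗ H`. -/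
def IsRightCoidealSubalgebra (K : Subalgebra k H) : Prop :=
  ∀ x ∈ K, Coalgebra.comul (R := k) x ∈
    LinearMap.range (LinearMap.rTensor H K.toSubmodule.subtype)

/-- A left ideal coideal of `H`: `HI ⊆ I`, `Δ(I) ⊆ I ⊗ H + H ⊗ I`, `ε(I) = 0`. -/
def IsLeftIdealCoideal (I : Submodule k H) : Prop :=
  (∀ x ∈ I, ∀ h : H, h * x ∈ I) ∧
  (∀ x ∈ I, Coalgebra.comul (R := k) x ∈
      LinearMap.range (LinearMap.rTensor H I.subtype) ⊔
        LinearMap.range (LinearMap.lTensor H I.subtype)) ∧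
  ∀ x ∈ I, Coalgebra.counit (R := k) x = 0

/-- The augmentation ideal `W⁺ = W ∩ ker ε` of a subspace `W ⊆ H`. -/
def augIdeal (W : Submodule k H) : Submodule k H :=
  W ⊓ LinearMap.ker (Coalgebra.counit (R := k) (A := H))

/-- The left ideal `H·W` generated by a subspace `W ⊆ H`. -/
def leftIdealGen (W : Submodule k H) : Submodule k H :=
  Submodule.span k {x : H | ∃ h : H, ∃ y ∈ W, x = h * y}

/-- The coinvariants `^{co H/I}H = { h : π(h₁) ⊗ h₂ = π(1) ⊗ h }` of the left
coaction of the quotient coalgebra `H/I` on `H`. -/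
def lCoinv (I : Submodule k H) : Set H :=
  {h : H | LinearMap.rTensor H I.mkQ (Coalgebra.comul (R := k) h) =
    I.mkQ 1 ⊗ₜ[k] h}

/-- A coinvariant `h` satisfies `π h = ε h • π 1`. -/
theorem lCoinv_mkQ (I : Submodule k H) {h : H} (hh : h ∈ lCoinv I) :
    I.mkQ h = Coalgebra.counit (R := k) h • I.mkQ 1 := by
  have hc := congrArg (LinearMap.lTensor (H ⧸ I) (Coalgebra.counit (R := k) (A := H))) hh
  have comm : (LinearMap.lTensor (H ⧸ I) (Coalgebra.counit (R := k) (A := H))).comp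
      (LinearMap.rTensor H I.mkQ) =
      (LinearMap.rTensor k I.mkQ).comp
        (LinearMap.lTensor H (Coalgebra.counit (R := k) (A := H))) := by
    rw [LinearMap.lTensor_comp_rTensor, LinearMap.rTensor_comp_lTensor]
  have l1 : (LinearMap.lTensor (H ⧸ I) (Coalgebra.counit (R := k) (A := H)))
      ((LinearMap.rTensor H I.mkQ) (Coalgebra.comul (R := k) h)) =
      I.mkQ h ⊗ₜ[k] (1 : k) := by
    rw [← LinearMap.comp_apply, comm, LinearMap.comp_apply,
      Coalgebra.lTensor_counit_comul]
    simp [LinearMap.rTensor_tmul]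
  rw [l1, LinearMap.lTensor_tmul] at hc
  have := congrArg (TensorProduct.rid k (H ⧸ I)) hc
  simpa using this

/-- For a left ideal coideal `I`, `H·(^{co H/I}H)⁺ ⊆ I`.  Together with the
inclusion `K ⊆ ^{co H/HK⁺}H` for every right coideal subalgebra `K`, this
establishes the Galois property of the pair `(K ↦ H/HK⁺, H/I ↦ ^{co H/I}H)`
between right coideal subalgebras and generalised quotients of `H`. -/
theorem galois_property_for_H_over_k :
    (∀ I : Submodule k H, IsLeftIdealCoideal I →
      leftIdealGen (augIdeal (Submodule.span k (lCoinv I))) ≤ I) ∧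
    (∀ K : Subalgebra k H, IsRightCoidealSubalgebra K →
      (K : Set H) ⊆ lCoinv (leftIdealGen (augIdeal K.toSubmodule))) := by
  constructor
  · intro I hI
    -- every element of span (lCoinv I) satisfies π h = ε h • π 1
    have hspan : ∀ h ∈ Submodule.span k (lCoinv I),
        I.mkQ h = Coalgebra.counit (R := k) h • I.mkQ 1 := by
      intro h hh
      induction hh using Submodule.span_induction with
      | mem x hx => exact lCoinv_mkQ I hx
      | zero => simp
      | add x y _ _ hx hy => rw [map_add, hx, hy, map_add, add_smul]
      | smul c x _ hx => rw [map_smul, hx, map_smul, smul_assoc]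
    rw [leftIdealGen, Submodule.span_le]
    rintro x ⟨a, y, ⟨hy, hεy⟩, rfl⟩
    have hyI : y ∈ I := by
      have := hspan y hy
      rw [LinearMap.mem_ker.mp hεy, zero_smul] at this
      exact (Submodule.Quotient.mk_eq_zero I).mp this
    exact hI.1 y hyI a
  · intro K hK x hx
    set I : Submodule k H := leftIdealGen (augIdeal K.toSubmodule) with hIdef
    -- π c = ε c • π 1 for c ∈ K
    have key : ∀ c ∈ K, I.mkQ c = Coalgebra.counit (R := k) c • I.mkQ 1 := by
      intro c hc
      have hmem : c - Coalgebra.counit (R := k) c • 1 ∈ I := by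
        apply Submodule.subset_span
        refine ⟨1, c - Coalgebra.counit (R := k) c • 1, ⟨?_, ?_⟩, (one_mul _).symm⟩
        · exact sub_mem hc (Submodule.smul_mem _ _ (one_mem K))
        · simp [LinearMap.mem_ker, map_sub]
      have : I.mkQ (c - Coalgebra.counit (R := k) c • 1) = 0 :=
        (Submodule.Quotient.mk_eq_zero I).mpr hmem
      rw [map_sub, map_smul, sub_eq_zero] at this
      exact this
    obtain ⟨t, ht⟩ := hK x hx
    show LinearMap.rTensor H I.mkQ (Coalgebra.comul (R := k) x) = I.mkQ 1 ⊗ₜ[k] x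
    rw [← ht, ← LinearMap.comp_apply, ← LinearMap.rTensor_comp]
    have hcomp : I.mkQ ∘ₗ K.toSubmodule.subtype =
        (LinearMap.toSpanSingleton k (H ⧸ I) (I.mkQ 1)) ∘ₗ
          ((Coalgebra.counit (R := k) (A := H)) ∘ₗ K.toSubmodule.subtype) := by
      ext c
      simpa using key c c.2
    rw [hcomp, LinearMap.rTensor_comp, LinearMap.comp_apply]
    have h1 : LinearMap.rTensor H ((Coalgebra.counit (R := k) (A := H)) ∘ₗ
        K.toSubmodule.subtype) t = (1 : k) ⊗ₜ[k] x := by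
      rw [LinearMap.rTensor_comp, LinearMap.comp_apply, ht,
        Coalgebra.rTensor_counit_comul]
    rw [h1, LinearMap.rTensor_tmul]
    simp
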